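/- arXiv:0807.3593 — 2 statements merged into one kernel-verified Lean document; each statement's English description precedes it below -/
import Mathlib

section
/- Let T, V, W₁, W₂, Y₁, Y₂ be random variables on a common probability space taking values in finite sets. If I(W₁;Y₂|(T,W₂)) = I(W₂;Y₁|(T,W₁)) and I(V;Y₂|(T,W₂)) = I(V;Y₂|W₂), then I(T;Y₁|W₁) + I(V;Y₂|W₂) ≤ I(V;Y₂|(T,W₁,W₂)) + I((T,W₂);Y₁|W₁). -/
open MeasureTheory Real

/-- Shannon entropy (in nats) of a random variable taking values in a finite set. -/
noncomputable def entropy {Ω : Type*} [MeasurableSpace Ω] (μ : Measure Ω)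
    {S : Type*} [Fintype S] (X : Ω → S) : ℝ :=
  ∑ x : S, Real.negMulLog (μ (X ⁻¹' {x})).toReal

/-- Mutual information `I(X;Y) = H(X) + H(Y) - H(X,Y)`. -/
noncomputable def mutualInfo {Ω : Type*} [MeasurableSpace Ω] (μ : Measure Ω)
    {S T : Type*} [Fintype S] [Fintype T] (X : Ω → S) (Y : Ω → T) : ℝ :=
  entropy μ X + entropy μ Y - entropy μ (fun ω => (X ω, Y ω))

/-- Conditional mutual information `I(X;Y|Z) = H(X,Z) + H(Y,Z) - H(X,Y,Z) - H(Z)`. -/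
noncomputable def condMutualInfo {Ω : Type*} [MeasurableSpace Ω] (μ : Measure Ω)
    {S T R : Type*} [Fintype S] [Fintype T] [Fintype R]
    (X : Ω → S) (Y : Ω → T) (Z : Ω → R) : ℝ :=
  entropy μ (fun ω => (X ω, Z ω)) + entropy μ (fun ω => (Y ω, Z ω))
    - entropy μ (fun ω => (X ω, Y ω, Z ω)) - entropy μ Z

/-! The chain rule, applied to `I((T,W₂);Y₁|W₁)` and in two orders to `I((W₁,V);Y₂|T,W₂)`,
together with the two hypotheses, shows that the right-hand side minus the left-hand side is
`I(W₁;Y₂|V,T,W₂)`. Conditional mutual information is nonnegative: for each value `z` of the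
conditioning variable it is the mutual information of the slice `P(·,·,z)` of the joint law,
and `p log(ab/(pr)) ≤ ab/r - p` (from `log x ≤ x - 1`) sums to zero over such a slice. -/

open Finset

section ChainRule

variable {Ω : Type*} [MeasurableSpace Ω] (μ : Measure Ω)

lemma entropy_comp_of_injective {S T : Type*} [Fintype S] [Fintype T]
    (X : Ω → S) {f : S → T} (hf : Function.Injective f) :
    entropy μ (fun ω => f (X ω)) = entropy μ X := by
  refine (Fintype.sum_of_injective f hf _ _ (fun t ht => ?_) fun s => ?_).symm
  · have : (fun ω => f (X ω)) ⁻¹' {t} = ∅ :=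
      Set.eq_empty_of_forall_notMem fun ω hω => ht ⟨X ω, hω⟩
    simp [this]
  · simp only [Set.preimage, Set.mem_singleton_iff, hf.eq_iff]

lemma entropy_congr_of_injective {S T U : Type*} [Fintype S] [Fintype T] [Fintype U]
    (X : Ω → S) {f : S → T} {g : S → U}
    (hf : Function.Injective f) (hg : Function.Injective g) :
    entropy μ (fun ω => f (X ω)) = entropy μ (fun ω => g (X ω)) := by
  rw [entropy_comp_of_injective μ X hf, entropy_comp_of_injective μ X hg]

variable {SA SB SY SZ SR : Type*} [Fintype SA] [Fintype SB] [Fintype SY] [Fintype SZ] [Fintype SR]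

lemma condMutualInfo_chain_rule (A : Ω → SA) (B : Ω → SB) (Y : Ω → SY) (Z : Ω → SZ) :
    condMutualInfo μ (fun ω => (A ω, B ω)) Y Z
      = condMutualInfo μ A Y Z + condMutualInfo μ B Y (fun ω => (A ω, Z ω)) := by
  have e₁ := entropy_congr_of_injective μ (fun ω => (A ω, B ω, Z ω))
    (f := fun p => ((p.1, p.2.1), p.2.2)) (g := fun p => (p.2.1, p.1, p.2.2))
    (by rintro ⟨_, _, _⟩ ⟨_, _, _⟩ h; simp_all) (by rintro ⟨_, _, _⟩ ⟨_, _, _⟩ h; simp_all)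
  have e₂ := entropy_congr_of_injective μ (fun ω => (A ω, B ω, Y ω, Z ω))
    (f := fun p => ((p.1, p.2.1), p.2.2)) (g := fun p => (p.2.1, p.2.2.1, p.1, p.2.2.2))
    (by rintro ⟨_, _, _⟩ ⟨_, _, _⟩ h; simp_all) (by rintro ⟨_, _, _, _⟩ ⟨_, _, _, _⟩ h; simp_all)
  have e₃ := entropy_comp_of_injective μ (fun ω => (A ω, Y ω, Z ω))
    (f := fun p => (p.2.1, p.1, p.2.2)) (by rintro ⟨_, _, _⟩ ⟨_, _, _⟩ h; simp_all)
  simp only [condMutualInfo] at e₁ e₂ e₃ ⊢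
  linarith

lemma condMutualInfo_comp_left_of_injective (X : Ω → SA) (Y : Ω → SY) (Z : Ω → SZ)
    {f : SA → SB} (hf : Function.Injective f) :
    condMutualInfo μ (fun ω => f (X ω)) Y Z = condMutualInfo μ X Y Z := by
  have hf₁ : Function.Injective (fun p : SA × SZ => (f p.1, p.2)) :=
    hf.prodMap Function.injective_id
  have hf₂ : Function.Injective (fun p : SA × SY × SZ => (f p.1, p.2)) :=
    hf.prodMap Function.injective_id
  simp only [condMutualInfo, entropy_comp_of_injective μ (fun ω => (X ω, Z ω)) hf₁,
    entropy_comp_of_injective μ (fun ω => (X ω, Y ω, Z ω)) hf₂]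

lemma condMutualInfo_comp_cond_of_injective (X : Ω → SA) (Y : Ω → SY) (Z : Ω → SZ)
    {f : SZ → SR} (hf : Function.Injective f) :
    condMutualInfo μ X Y (fun ω => f (Z ω)) = condMutualInfo μ X Y Z := by
  have hfX : Function.Injective (fun p : SA × SZ => (p.1, f p.2)) :=
    Function.injective_id.prodMap hf
  have hfY : Function.Injective (fun p : SY × SZ => (p.1, f p.2)) :=
    Function.injective_id.prodMap hf
  have hfXY : Function.Injective (fun p : SA × SY × SZ => (p.1, p.2.1, f p.2.2)) :=
    Function.injective_id.prodMap hfY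
  simp only [condMutualInfo, entropy_comp_of_injective μ (fun ω => (X ω, Z ω)) hfX,
    entropy_comp_of_injective μ (fun ω => (Y ω, Z ω)) hfY,
    entropy_comp_of_injective μ (fun ω => (X ω, Y ω, Z ω)) hfXY, entropy_comp_of_injective μ Z hf]

lemma condMutualInfo_add_condMutualInfo_comm (A : Ω → SA) (B : Ω → SB) (Y : Ω → SY)
    (Z : Ω → SZ) :
    condMutualInfo μ A Y Z + condMutualInfo μ B Y (fun ω => (A ω, Z ω))
      = condMutualInfo μ B Y Z + condMutualInfo μ A Y (fun ω => (B ω, Z ω)) := by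
  rw [← condMutualInfo_chain_rule, ← condMutualInfo_chain_rule,
    ← condMutualInfo_comp_left_of_injective μ (fun ω => (A ω, B ω)) Y Z Prod.swap_injective]
  rfl

end ChainRule

section Nonnegativity

variable {α β : Type*} [Fintype α] [Fintype β]

-- `Q` is a joint mass function up to normalization, such as a slice `P(·,·,z)`.
noncomputable def mutualInfoOfJoint (Q : α → β → ℝ) : ℝ :=
  ∑ x, negMulLog (∑ y, Q x y) + ∑ y, negMulLog (∑ x, Q x y)
    - ∑ x, ∑ y, negMulLog (Q x y) - negMulLog (∑ x, ∑ y, Q x y)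

lemma mul_log_mul_div_le {p a b r : ℝ} (hp : 0 ≤ p) (ha : p ≤ a) (hb : p ≤ b) (hr : p ≤ r) :
    p * (log a + log b - log p - log r) ≤ a * b / r - p := by
  obtain rfl | hp := hp.eq_or_lt
  · have : 0 ≤ a * b / r := by positivity
    simpa using this
  have ha := hp.trans_le ha
  have hb := hp.trans_le hb
  have hr := hp.trans_le hr
  have hlog : log a + log b - log p - log r = log (a * b / (p * r)) := by
    rw [log_div (by positivity) (by positivity), log_mul ha.ne' hb.ne', log_mul hp.ne' hr.ne']
    ring
  calc p * (log a + log b - log p - log r) ≤ p * (a * b / (p * r) - 1) := by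
        rw [hlog]
        exact mul_le_mul_of_nonneg_left (log_le_sub_one_of_pos (by positivity)) hp.le
    _ = a * b / r - p := by field_simp

lemma negMulLog_sum {ι : Type*} (s : Finset ι) (f : ι → ℝ) :
    negMulLog (∑ i ∈ s, f i) = -∑ i ∈ s, f i * log (∑ j ∈ s, f j) := by
  rw [negMulLog, neg_mul, sum_mul]

lemma mutualInfoOfJoint_eq (Q : α → β → ℝ) :
    mutualInfoOfJoint Q = -∑ x, ∑ y, Q x y * (log (∑ y', Q x y') + log (∑ x', Q x' y)
      - log (Q x y) - log (∑ x', ∑ y', Q x' y')) := by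
  have hrows : ∑ x, negMulLog (∑ y, Q x y) = -∑ x, ∑ y, Q x y * log (∑ y', Q x y') := by
    simp only [negMulLog_sum, sum_neg_distrib]
  have hcols : ∑ y, negMulLog (∑ x, Q x y) = -∑ x, ∑ y, Q x y * log (∑ x', Q x' y) := by
    simp only [negMulLog_sum, sum_neg_distrib]
    rw [sum_comm]
  have hentries : ∑ x, ∑ y, negMulLog (Q x y) = -∑ x, ∑ y, Q x y * log (Q x y) := by
    simp only [negMulLog, neg_mul, sum_neg_distrib]
  have htotal : negMulLog (∑ x, ∑ y, Q x y)
      = -∑ x, ∑ y, Q x y * log (∑ x', ∑ y', Q x' y') := by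
    simp only [negMulLog_sum, sum_mul]
  rw [mutualInfoOfJoint, hrows, hcols, hentries, htotal]
  simp only [mul_add, mul_sub, sum_add_distrib, sum_sub_distrib]
  ring

lemma mutualInfoOfJoint_nonneg {Q : α → β → ℝ} (hQ : ∀ x y, 0 ≤ Q x y) :
    0 ≤ mutualInfoOfJoint Q := by
  rw [mutualInfoOfJoint_eq]
  set a := fun x => ∑ y, Q x y
  set b := fun y => ∑ x, Q x y
  set r := ∑ x, ∑ y, Q x y with hr
  have hQa : ∀ x y, Q x y ≤ a x := fun x y => single_le_sum (fun y _ => hQ x y) (mem_univ y)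
  have hQb : ∀ x y, Q x y ≤ b y := fun x y => single_le_sum (fun x _ => hQ x y) (mem_univ x)
  have hQr : ∀ x y, Q x y ≤ r := fun x y =>
    (hQa x y).trans (single_le_sum (fun x _ => sum_nonneg fun y _ => hQ x y) (mem_univ x))
  have hbound : ∑ x, ∑ y, Q x y * (log (a x) + log (b y) - log (Q x y) - log r)
      ≤ ∑ x, ∑ y, (a x * b y / r - Q x y) :=
    sum_le_sum fun x _ => sum_le_sum fun y _ =>
      mul_log_mul_div_le (hQ x y) (hQa x y) (hQb x y) (hQr x y)
  -- `∑ x, ∑ y, a x * b y / r = r * r / r = r`, also when `r = 0`.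
  have hzero : ∑ x, ∑ y, (a x * b y / r - Q x y) = 0 := by
    have hrb : ∑ y, b y = r := sum_comm
    simp only [sum_sub_distrib, ← sum_div, ← Fintype.sum_mul_sum, hrb, ← hr]
    rw [mul_self_div_self, sub_self]
  linarith

end Nonnegativity

lemma preimage_pair_singleton {Ω S T : Type*} (U : Ω → S) (V : Ω → T) (u : S) (v : T) :
    (fun ω => (U ω, V ω)) ⁻¹' {(u, v)} = U ⁻¹' {u} ∩ V ⁻¹' {v} := by
  rw [← Set.singleton_prod_singleton, Set.mk_preimage_prod]

section RandomVariables

variable {Ω : Type*} [MeasurableSpace Ω] (μ : Measure Ω) [IsFiniteMeasure μ]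

lemma measureReal_eq_sum_preimage_inter {β : Type*} [Fintype β] [MeasurableSpace β]
    [MeasurableSingletonClass β] {B : Ω → β} (hB : Measurable B) (s : Set Ω) :
    μ.real s = ∑ b, μ.real (B ⁻¹' {b} ∩ s) := by
  rw [← measureReal_restrict_apply_univ, ← Set.preimage_univ (f := B), ← coe_univ,
    ← sum_measureReal_preimage_singleton _ fun b _ => hB (measurableSet_singleton b)]
  exact sum_congr rfl fun b _ => measureReal_restrict_apply (hB (measurableSet_singleton b))

lemma condMutualInfo_eq_sum_mutualInfoOfJoint {SX SY SZ : Type*}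
    [Fintype SX] [MeasurableSpace SX] [MeasurableSingletonClass SX]
    [Fintype SY] [MeasurableSpace SY] [MeasurableSingletonClass SY] [Fintype SZ]
    {X : Ω → SX} {Y : Ω → SY} (hX : Measurable X) (hY : Measurable Y) (Z : Ω → SZ) :
    condMutualInfo μ X Y Z
      = ∑ z, mutualInfoOfJoint fun x y => μ.real (X ⁻¹' {x} ∩ (Y ⁻¹' {y} ∩ Z ⁻¹' {z})) := by
  have hXZ : ∀ x z, μ.real (X ⁻¹' {x} ∩ Z ⁻¹' {z})
      = ∑ y, μ.real (X ⁻¹' {x} ∩ (Y ⁻¹' {y} ∩ Z ⁻¹' {z})) := fun x z => by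
    simp only [measureReal_eq_sum_preimage_inter μ hY (X ⁻¹' {x} ∩ Z ⁻¹' {z}),
      Set.inter_left_comm]
  have hYZ : ∀ y z, μ.real (Y ⁻¹' {y} ∩ Z ⁻¹' {z})
      = ∑ x, μ.real (X ⁻¹' {x} ∩ (Y ⁻¹' {y} ∩ Z ⁻¹' {z})) := fun y z =>
    measureReal_eq_sum_preimage_inter μ hX _
  have hZ : ∀ z, μ.real (Z ⁻¹' {z})
      = ∑ x, ∑ y, μ.real (X ⁻¹' {x} ∩ (Y ⁻¹' {y} ∩ Z ⁻¹' {z})) := fun z => by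
    simp only [measureReal_eq_sum_preimage_inter μ hX (Z ⁻¹' {z}), hXZ]
  simp only [condMutualInfo, entropy, Fintype.sum_prod_type, preimage_pair_singleton,
    ← measureReal_def, hXZ, hYZ, hZ, mutualInfoOfJoint, sum_add_distrib, sum_sub_distrib]
  rw [sum_comm (s := univ (α := SX)), sum_comm (s := univ (α := SY)), sum_comm_cycle]

lemma condMutualInfo_nonneg {SX SY SZ : Type*}
    [Fintype SX] [MeasurableSpace SX] [MeasurableSingletonClass SX]
    [Fintype SY] [MeasurableSpace SY] [MeasurableSingletonClass SY] [Fintype SZ]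
    {X : Ω → SX} {Y : Ω → SY} (hX : Measurable X) (hY : Measurable Y) (Z : Ω → SZ) :
    0 ≤ condMutualInfo μ X Y Z := by
  rw [condMutualInfo_eq_sum_mutualInfoOfJoint μ hX hY Z]
  exact sum_nonneg fun z _ => mutualInfoOfJoint_nonneg fun x y => measureReal_nonneg

end RandomVariables

theorem stmt_10_general
    {Ω : Type*} [MeasurableSpace Ω] (μ : Measure Ω) [IsProbabilityMeasure μ]
    {ST SV SW₁ SW₂ SY₁ SY₂ : Type*}
    [Fintype ST] [Fintype SV] [Fintype SW₁] [MeasurableSpace SW₁] [MeasurableSingletonClass SW₁] [Fintype SW₂] [Fintype SY₁] [Fintype SY₂] [MeasurableSpace SY₂] [MeasurableSingletonClass SY₂]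
    (T : Ω → ST) (V : Ω → SV) (W₁ : Ω → SW₁) (W₂ : Ω → SW₂) (Y₁ : Ω → SY₁) (Y₂ : Ω → SY₂)
    (hW₁ : Measurable W₁) (hY₂ : Measurable Y₂)
    (h0 : condMutualInfo μ W₁ Y₂ (fun ω => (T ω, W₂ ω)) = condMutualInfo μ W₂ Y₁ (fun ω => (T ω, W₁ ω)))
    (h1 : condMutualInfo μ V Y₂ (fun ω => (T ω, W₂ ω)) = condMutualInfo μ V Y₂ W₂)
    : condMutualInfo μ T Y₁ W₁ + condMutualInfo μ V Y₂ W₂ ≤ condMutualInfo μ V Y₂ (fun ω => (T ω, W₁ ω, W₂ ω)) + condMutualInfo μ (fun ω => (T ω, W₂ ω)) Y₁ W₁ := by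
  have hchain := condMutualInfo_chain_rule μ T W₂ Y₁ W₁
  have hcomm := condMutualInfo_add_condMutualInfo_comm μ W₁ V Y₂ (fun ω => (T ω, W₂ ω))
  have hcond : condMutualInfo μ V Y₂ (fun ω => (W₁ ω, T ω, W₂ ω))
      = condMutualInfo μ V Y₂ (fun ω => (T ω, W₁ ω, W₂ ω)) :=
    condMutualInfo_comp_cond_of_injective μ V Y₂ (fun ω => (T ω, W₁ ω, W₂ ω))
      (f := fun p => (p.2.1, p.1, p.2.2))
      (by rintro ⟨_, _, _⟩ ⟨_, _, _⟩ h; simp_all)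
  have hnonneg := condMutualInfo_nonneg μ hW₁ hY₂ (fun ω => (V ω, T ω, W₂ ω))
  linarith

theorem stmt_10
    {Ω : Type*} [MeasurableSpace Ω] (μ : Measure Ω) [IsProbabilityMeasure μ]
    {ST SV SW₁ SW₂ SY₁ SY₂ : Type*}
    [Fintype ST] [MeasurableSpace ST] [MeasurableSingletonClass ST] [Fintype SV] [MeasurableSpace SV] [MeasurableSingletonClass SV] [Fintype SW₁] [MeasurableSpace SW₁] [MeasurableSingletonClass SW₁] [Fintype SW₂] [MeasurableSpace SW₂] [MeasurableSingletonClass SW₂] [Fintype SY₁] [MeasurableSpace SY₁] [MeasurableSingletonClass SY₁] [Fintype SY₂] [MeasurableSpace SY₂] [MeasurableSingletonClass SY₂]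
    (T : Ω → ST) (V : Ω → SV) (W₁ : Ω → SW₁) (W₂ : Ω → SW₂) (Y₁ : Ω → SY₁) (Y₂ : Ω → SY₂)
    (hT : Measurable T) (hV : Measurable V) (hW₁ : Measurable W₁) (hW₂ : Measurable W₂) (hY₁ : Measurable Y₁) (hY₂ : Measurable Y₂)
    (h0 : condMutualInfo μ W₁ Y₂ (fun ω => (T ω, W₂ ω)) = condMutualInfo μ W₂ Y₁ (fun ω => (T ω, W₁ ω)))
    (h1 : condMutualInfo μ V Y₂ (fun ω => (T ω, W₂ ω)) = condMutualInfo μ V Y₂ W₂)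
    : condMutualInfo μ T Y₁ W₁ + condMutualInfo μ V Y₂ W₂ ≤ condMutualInfo μ V Y₂ (fun ω => (T ω, W₁ ω, W₂ ω)) + condMutualInfo μ (fun ω => (T ω, W₂ ω)) Y₁ W₁ :=
  stmt_10_general μ T V W₁ W₂ Y₁ Y₂ hW₁ hY₂ h0 h1
end

section
/- Let T, U, V, W₁, W₂, Y₁, Y₂ be random variables on a common probability space taking values in finite sets. If I(V;Y₂|(T,W₂)) = I(V;Y₂|W₂), I(W₁;Y₂|(T,V,W₂)) = I(W₂;Y₁|(T,V,W₁)), and I(U;Y₁|(T,V,W₁)) = I(U;Y₁|W₁), then I(T;Y₂|W₂) + I(U;Y₁|W₁) + I(V;Y₂|W₂) ≤ I(U;Y₁|(T,V,W₁,W₂)) + I((T,V,W₁);Y₂|W₂). -/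
open MeasureTheory Real

/-!
Expanding `I((T,V,W₁);Y₂|W₂)` by the chain rule gives
`I(T;Y₂|W₂) + I(V;Y₂|T,W₂) + I(W₁;Y₂|T,V,W₂)`, and expanding `I((U,W₂);Y₁|T,V,W₁)` by the chain
rule in both orders gives
`I(U;Y₁|T,V,W₁,W₂) + I(W₂;Y₁|T,V,W₁) = I(U;Y₁|T,V,W₁) + I(W₂;Y₁|U,T,V,W₁) ≥ I(U;Y₁|T,V,W₁)`.
The three hypotheses turn the sum of these two relations into the claim.

Nonnegativity of conditional mutual information is proved one value `z` of the conditioning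
variable at a time: on the slice `Z = z` it is Gibbs' inequality comparing the joint mass of
`(X, Y)` with the product of its marginals, which has the same total mass.
-/

open Finset

theorem Setoid.ker_prodMk {α β γ : Type*} (f : α → β) (g : α → γ) :
    Setoid.ker (fun a => (f a, g a)) = Setoid.ker f ⊓ Setoid.ker g :=
  Setoid.ext fun _ _ => Prod.ext_iff

theorem Set.preimage_prodMk_singleton {α β γ : Type*} (f : α → β) (g : α → γ) (b : β) (c : γ) :
    (fun a => (f a, g a)) ⁻¹' {(b, c)} = f ⁻¹' {b} ∩ g ⁻¹' {c} := by
  rw [← Set.singleton_prod_singleton, Set.mk_preimage_prod]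

theorem Real.sub_le_mul_log_div {q r : ℝ} (hq : 0 < q) (hr : 0 < r) :
    q - r ≤ q * log (q / r) :=
  calc q - r = q * (1 - (q / r)⁻¹) := by field_simp
    _ ≤ q * log (q / r) :=
      mul_le_mul_of_nonneg_left (one_sub_inv_le_log_of_pos (by positivity)) hq.le

-- `I(X;Y)` computed from a joint mass `q x y` that need not sum to one.
noncomputable def massMutualInfo {S T : Type*} [Fintype S] [Fintype T] (q : S → T → ℝ) : ℝ :=
  ∑ x, negMulLog (∑ y, q x y) + ∑ y, negMulLog (∑ x, q x y)
    - ∑ x, ∑ y, negMulLog (q x y) - negMulLog (∑ x, ∑ y, q x y)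

theorem massMutualInfo_eq_sum_mul_log {S T : Type*} [Fintype S] [Fintype T] (q : S → T → ℝ) :
    massMutualInfo q = ∑ x, ∑ y, q x y * (log (q x y) - log (∑ y', q x y')
      - log (∑ x', q x' y) + log (∑ x', ∑ y', q x' y')) := by
  have hrow : ∑ x, ∑ y, q x y * log (∑ y', q x y') = -∑ x, negMulLog (∑ y, q x y) := by
    simp only [negMulLog, neg_mul, sum_neg_distrib, neg_neg, ← sum_mul]
  have hcol : ∑ x, ∑ y, q x y * log (∑ x', q x' y) = -∑ y, negMulLog (∑ x, q x y) := by
    rw [sum_comm]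
    simp only [negMulLog, neg_mul, sum_neg_distrib, neg_neg, ← sum_mul]
  have htotal : ∑ x, ∑ y, q x y * log (∑ x', ∑ y', q x' y')
      = -negMulLog (∑ x, ∑ y, q x y) := by
    simp only [negMulLog, neg_mul, neg_neg, ← sum_mul]
  have hjoint : ∑ x, ∑ y, q x y * log (q x y) = -∑ x, ∑ y, negMulLog (q x y) := by
    simp [negMulLog]
  simp only [mul_add, mul_sub, sum_add_distrib, sum_sub_distrib, hrow, hcol, htotal, hjoint,
    massMutualInfo]
  ring

theorem massMutualInfo_nonneg {S T : Type*} [Fintype S] [Fintype T] {q : S → T → ℝ}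
    (hq : ∀ x y, 0 ≤ q x y) : 0 ≤ massMutualInfo q := by
  set a := fun x => ∑ y, q x y
  set b := fun y => ∑ x, q x y
  set c := ∑ x, ∑ y, q x y
  have hqa (x y) : q x y ≤ a x := single_le_sum (fun y _ => hq x y) (mem_univ y)
  have hqb (x y) : q x y ≤ b y := single_le_sum (fun x _ => hq x y) (mem_univ x)
  have hac (x) : a x ≤ c := single_le_sum (fun x _ => sum_nonneg fun y _ => hq x y) (mem_univ x)
  have hpoint (x y) :
      q x y - a x * b y / c ≤ q x y * (log (q x y) - log (a x) - log (b y) + log c) := by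
    rcases (hq x y).eq_or_lt with h | h
    · rw [← h, zero_sub, zero_mul, neg_nonpos]
      exact div_nonneg (mul_nonneg (h.le.trans (hqa x y)) (h.le.trans (hqb x y)))
        (h.le.trans ((hqa x y).trans (hac x)))
    have ha : 0 < a x := h.trans_le (hqa x y)
    have hb : 0 < b y := h.trans_le (hqb x y)
    have hc : 0 < c := ha.trans_le (hac x)
    convert Real.sub_le_mul_log_div h (by positivity : 0 < a x * b y / c) using 2
    rw [log_div h.ne' (by positivity), log_div (by positivity) hc.ne', log_mul ha.ne' hb.ne']
    ring
  have hproduct : ∑ x, ∑ y, a x * b y / c = c := by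
    simp_rw [mul_div_assoc, ← mul_sum, ← sum_mul, ← sum_div]
    rw [show ∑ y, b y = c from sum_comm, mul_div_assoc', mul_self_div_self]
  have hmass : ∑ x, ∑ y, (q x y - a x * b y / c) = 0 := by
    rw [sum_congr rfl fun x _ => sum_sub_distrib .., sum_sub_distrib, hproduct, sub_self]
  rw [massMutualInfo_eq_sum_mul_log, ← hmass]
  exact sum_le_sum fun x _ => sum_le_sum fun y _ => hpoint x y

section
variable {Ω : Type*} [MeasurableSpace Ω] (μ : Measure Ω) {S S' T T' R R' : Type*}

theorem exists_eq_of_negMulLog_measure_preimage_ne_zero {X : Ω → S} {s : S}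
    (hs : negMulLog (μ (X ⁻¹' {s})).toReal ≠ 0) : ∃ ω, X ω = s := by
  by_contra! hempty
  exact hs (by simp [Set.preimage_singleton_eq_empty.mpr (by simpa [Set.mem_range] using hempty)])

variable [Fintype S] [Fintype S'] [Fintype T] [Fintype T'] [Fintype R] [Fintype R']

theorem entropy_congr_of_ker_eq {X : Ω → S} {X' : Ω → S'}
    (h : Setoid.ker X = Setoid.ker X') : entropy μ X = entropy μ X' := by
  have hker (ω ω' : Ω) : X ω = X ω' ↔ X' ω = X' ω' := Setoid.ext_iff.mp h ω ω'
  have hfiber (ω : Ω) : X ⁻¹' {X ω} = X' ⁻¹' {X' ω} := Set.ext fun ω' => hker ω' ω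
  have hwitness {s : S} (hs : negMulLog (μ (X ⁻¹' {s})).toReal ≠ 0) :=
    exists_eq_of_negMulLog_measure_preimage_ne_zero μ hs
  refine sum_bij_ne_zero (fun s _ hs => X' (hwitness hs).choose)
    (fun _ _ _ => mem_univ _) ?_ ?_ ?_
  · intro s _ hs t _ ht hst
    rw [← (hwitness hs).choose_spec, ← (hwitness ht).choose_spec]
    exact (hker _ _).mpr hst
  · intro s' _ hs'
    obtain ⟨ω, rfl⟩ := exists_eq_of_negMulLog_measure_preimage_ne_zero μ hs'
    refine ⟨X ω, mem_univ _, by rwa [hfiber], ?_⟩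
    exact (hker _ _).mp (Exists.choose_spec (p := fun ω' => X ω' = X ω) _)
  · intro s _ hs
    rw [← hfiber, (hwitness hs).choose_spec]

theorem condMutualInfo_congr {X : Ω → S} {X' : Ω → S'} {Y : Ω → T} {Y' : Ω → T'}
    {Z : Ω → R} {Z' : Ω → R'} (hX : Setoid.ker X = Setoid.ker X')
    (hY : Setoid.ker Y = Setoid.ker Y') (hZ : Setoid.ker Z = Setoid.ker Z') :
    condMutualInfo μ X Y Z = condMutualInfo μ X' Y' Z' := by
  have hXZ : Setoid.ker (fun ω => (X ω, Z ω)) = Setoid.ker (fun ω => (X' ω, Z' ω)) := by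
    rw [Setoid.ker_prodMk, Setoid.ker_prodMk, hX, hZ]
  have hYZ : Setoid.ker (fun ω => (Y ω, Z ω)) = Setoid.ker (fun ω => (Y' ω, Z' ω)) := by
    rw [Setoid.ker_prodMk, Setoid.ker_prodMk, hY, hZ]
  have hXYZ :
      Setoid.ker (fun ω => (X ω, Y ω, Z ω)) = Setoid.ker (fun ω => (X' ω, Y' ω, Z' ω)) := by
    rw [Setoid.ker_prodMk, Setoid.ker_prodMk X', hX, hYZ]
  unfold condMutualInfo
  rw [entropy_congr_of_ker_eq μ hXZ, entropy_congr_of_ker_eq μ hYZ,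
    entropy_congr_of_ker_eq μ hXYZ, entropy_congr_of_ker_eq μ hZ]

theorem condMutualInfo_prodMk_left (X : Ω → S) (X' : Ω → S') (Y : Ω → T) (Z : Ω → R) :
    condMutualInfo μ (fun ω => (X ω, X' ω)) Y Z
      = condMutualInfo μ X Y Z + condMutualInfo μ X' Y (fun ω => (X ω, Z ω)) := by
  have h₁ : entropy μ (fun ω => ((X ω, X' ω), Z ω)) = entropy μ (fun ω => (X' ω, X ω, Z ω)) :=
    entropy_congr_of_ker_eq μ <| by simp only [Setoid.ker_prodMk]; ac_rfl
  have h₂ : entropy μ (fun ω => ((X ω, X' ω), Y ω, Z ω))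
      = entropy μ (fun ω => (X' ω, Y ω, X ω, Z ω)) :=
    entropy_congr_of_ker_eq μ <| by simp only [Setoid.ker_prodMk]; ac_rfl
  have h₃ : entropy μ (fun ω => (X ω, Y ω, Z ω)) = entropy μ (fun ω => (Y ω, X ω, Z ω)) :=
    entropy_congr_of_ker_eq μ <| by simp only [Setoid.ker_prodMk]; ac_rfl
  unfold condMutualInfo
  linarith

theorem condMutualInfo_add_condMutualInfo_comm_s11 (X : Ω → S) (X' : Ω → S') (Y : Ω → T)
    (Z : Ω → R) :
    condMutualInfo μ X Y (fun ω => (X' ω, Z ω)) + condMutualInfo μ X' Y Z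
      = condMutualInfo μ X Y Z + condMutualInfo μ X' Y (fun ω => (X ω, Z ω)) := by
  rw [add_comm, ← condMutualInfo_prodMk_left, ← condMutualInfo_prodMk_left]
  exact condMutualInfo_congr μ (by simp only [Setoid.ker_prodMk]; ac_rfl) rfl rfl

end

section
variable {Ω : Type*} [MeasurableSpace Ω] (μ : Measure Ω) {S T R : Type*}

theorem measureReal_eq_sum_preimage_singleton_inter [IsFiniteMeasure μ] [Fintype T]
    [MeasurableSpace T] [MeasurableSingletonClass T] {Y : Ω → T} (hY : Measurable Y)
    (s : Set Ω) : μ.real s = ∑ y, μ.real (Y ⁻¹' {y} ∩ s) := by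
  have := sum_measureReal_preimage_singleton (μ := μ.restrict s) univ
    (fun y _ => hY (measurableSet_singleton y))
  simp only [coe_univ, Set.preimage_univ, measureReal_restrict_apply_univ] at this
  rw [← this]
  exact sum_congr rfl fun y _ => measureReal_restrict_apply (hY (measurableSet_singleton y))

variable [Fintype S] [MeasurableSpace S] [MeasurableSingletonClass S]
  [Fintype T] [MeasurableSpace T] [MeasurableSingletonClass T] [Fintype R]

theorem condMutualInfo_eq_sum_massMutualInfo [IsFiniteMeasure μ] {X : Ω → S} {Y : Ω → T}
    (Z : Ω → R) (hX : Measurable X) (hY : Measurable Y) :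
    condMutualInfo μ X Y Z
      = ∑ z, massMutualInfo fun x y => μ.real (X ⁻¹' {x} ∩ (Y ⁻¹' {y} ∩ Z ⁻¹' {z})) := by
  have hXZ (x z) : μ.real (X ⁻¹' {x} ∩ Z ⁻¹' {z})
      = ∑ y, μ.real (X ⁻¹' {x} ∩ (Y ⁻¹' {y} ∩ Z ⁻¹' {z})) := by
    rw [measureReal_eq_sum_preimage_singleton_inter μ hY]
    simp_rw [Set.inter_left_comm (Y ⁻¹' _)]
  have hYZ (y z) : μ.real (Y ⁻¹' {y} ∩ Z ⁻¹' {z})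
      = ∑ x, μ.real (X ⁻¹' {x} ∩ (Y ⁻¹' {y} ∩ Z ⁻¹' {z})) :=
    measureReal_eq_sum_preimage_singleton_inter μ hX _
  have hZ' (z) : μ.real (Z ⁻¹' {z})
      = ∑ x, ∑ y, μ.real (X ⁻¹' {x} ∩ (Y ⁻¹' {y} ∩ Z ⁻¹' {z})) := by
    rw [measureReal_eq_sum_preimage_singleton_inter μ hX]
    simp_rw [hXZ]
  simp only [condMutualInfo, entropy, Fintype.sum_prod_type, Set.preimage_prodMk_singleton,
    ← measureReal_def, hXZ, hYZ, hZ', massMutualInfo, sum_add_distrib, sum_sub_distrib]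
  congr 1
  congr 1
  · congr 1 <;> exact sum_comm
  · exact (sum_congr rfl fun _ _ => sum_comm).trans sum_comm

theorem condMutualInfo_nonneg_s11 [IsFiniteMeasure μ] {X : Ω → S} {Y : Ω → T} (Z : Ω → R)
    (hX : Measurable X) (hY : Measurable Y) : 0 ≤ condMutualInfo μ X Y Z := by
  rw [condMutualInfo_eq_sum_massMutualInfo μ Z hX hY]
  exact sum_nonneg fun z _ => massMutualInfo_nonneg fun x y => measureReal_nonneg

end

theorem stmt_11_general
    {Ω : Type*} [MeasurableSpace Ω] (μ : Measure Ω) [IsProbabilityMeasure μ]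
    {ST SU SV SW₁ SW₂ SY₁ SY₂ : Type*}
    [Fintype ST] [Fintype SU] [Fintype SV] [Fintype SW₁] [Fintype SW₂] [MeasurableSpace SW₂] [MeasurableSingletonClass SW₂] [Fintype SY₁] [MeasurableSpace SY₁] [MeasurableSingletonClass SY₁] [Fintype SY₂]
    (T : Ω → ST) (U : Ω → SU) (V : Ω → SV) (W₁ : Ω → SW₁) (W₂ : Ω → SW₂) (Y₁ : Ω → SY₁) (Y₂ : Ω → SY₂)
    (hW₂ : Measurable W₂) (hY₁ : Measurable Y₁)
    (h0 : condMutualInfo μ V Y₂ (fun ω => (T ω, W₂ ω)) = condMutualInfo μ V Y₂ W₂)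
    (h1 : condMutualInfo μ W₁ Y₂ (fun ω => (T ω, V ω, W₂ ω)) = condMutualInfo μ W₂ Y₁ (fun ω => (T ω, V ω, W₁ ω)))
    (h2 : condMutualInfo μ U Y₁ (fun ω => (T ω, V ω, W₁ ω)) = condMutualInfo μ U Y₁ W₁)
    : condMutualInfo μ T Y₂ W₂ + condMutualInfo μ U Y₁ W₁ + condMutualInfo μ V Y₂ W₂ ≤ condMutualInfo μ U Y₁ (fun ω => (T ω, V ω, W₁ ω, W₂ ω)) + condMutualInfo μ (fun ω => (T ω, V ω, W₁ ω)) Y₂ W₂ := by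
  have hchain : condMutualInfo μ (fun ω => (T ω, V ω, W₁ ω)) Y₂ W₂
      = condMutualInfo μ T Y₂ W₂ + condMutualInfo μ V Y₂ (fun ω => (T ω, W₂ ω))
        + condMutualInfo μ W₁ Y₂ (fun ω => (T ω, V ω, W₂ ω)) := by
    rw [condMutualInfo_prodMk_left, condMutualInfo_prodMk_left, add_assoc]
    congr 2
    exact condMutualInfo_congr μ rfl rfl (by simp only [Setoid.ker_prodMk]; ac_rfl)
  have hexchange := condMutualInfo_add_condMutualInfo_comm_s11 μ U W₂ Y₁ (fun ω => (T ω, V ω, W₁ ω))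
  have hcond : condMutualInfo μ U Y₁ (fun ω => (W₂ ω, T ω, V ω, W₁ ω))
      = condMutualInfo μ U Y₁ (fun ω => (T ω, V ω, W₁ ω, W₂ ω)) :=
    condMutualInfo_congr μ rfl rfl (by simp only [Setoid.ker_prodMk]; ac_rfl)
  have hnonneg := condMutualInfo_nonneg_s11 μ (fun ω => (U ω, T ω, V ω, W₁ ω)) hW₂ hY₁
  linarith

theorem stmt_11
    {Ω : Type*} [MeasurableSpace Ω] (μ : Measure Ω) [IsProbabilityMeasure μ]
    {ST SU SV SW₁ SW₂ SY₁ SY₂ : Type*}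
    [Fintype ST] [MeasurableSpace ST] [MeasurableSingletonClass ST] [Fintype SU] [MeasurableSpace SU] [MeasurableSingletonClass SU] [Fintype SV] [MeasurableSpace SV] [MeasurableSingletonClass SV] [Fintype SW₁] [MeasurableSpace SW₁] [MeasurableSingletonClass SW₁] [Fintype SW₂] [MeasurableSpace SW₂] [MeasurableSingletonClass SW₂] [Fintype SY₁] [MeasurableSpace SY₁] [MeasurableSingletonClass SY₁] [Fintype SY₂] [MeasurableSpace SY₂] [MeasurableSingletonClass SY₂]
    (T : Ω → ST) (U : Ω → SU) (V : Ω → SV) (W₁ : Ω → SW₁) (W₂ : Ω → SW₂) (Y₁ : Ω → SY₁) (Y₂ : Ω → SY₂)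
    (hT : Measurable T) (hU : Measurable U) (hV : Measurable V) (hW₁ : Measurable W₁) (hW₂ : Measurable W₂) (hY₁ : Measurable Y₁) (hY₂ : Measurable Y₂)
    (h0 : condMutualInfo μ V Y₂ (fun ω => (T ω, W₂ ω)) = condMutualInfo μ V Y₂ W₂)
    (h1 : condMutualInfo μ W₁ Y₂ (fun ω => (T ω, V ω, W₂ ω)) = condMutualInfo μ W₂ Y₁ (fun ω => (T ω, V ω, W₁ ω)))
    (h2 : condMutualInfo μ U Y₁ (fun ω => (T ω, V ω, W₁ ω)) = condMutualInfo μ U Y₁ W₁)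
    : condMutualInfo μ T Y₂ W₂ + condMutualInfo μ U Y₁ W₁ + condMutualInfo μ V Y₂ W₂ ≤ condMutualInfo μ U Y₁ (fun ω => (T ω, V ω, W₁ ω, W₂ ω)) + condMutualInfo μ (fun ω => (T ω, V ω, W₁ ω)) Y₂ W₂ :=
  stmt_11_general μ T U V W₁ W₂ Y₁ Y₂ hW₂ hY₁ h0 h1 h2
end
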